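/- arXiv:2211.12812 — 8 statements merged into one kernel-verified Lean document; each statement's English description precedes it below -/
import Mathlib

section
/- Let G be a group with center Z, let Λ be a group, and let θ : Λ → Aut(G) be a group homomorphism such that θ(λ)(z) = z for every λ ∈ Λ and every z ∈ Z. Let Hom(Λ,Z) denote the group of homomorphisms Λ → Z under pointwise multiplication. Then the map c_θ : G_θ → Hom(Λ,Z) defined by c_θ(g)(λ) := θ(λ)(g)·g⁻¹ is a group homomorphism whose kernel is exactly G^θ; in particular the sequence 1 → G^θ → G_θ → Hom(Λ,Z) is exact and c_θ induces an injective homomorphism G_θ/G^θ → Hom(Λ,Z). -/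
open scoped IsMulCommutative

/-!
For `g ∈ G_θ` write `c g l := θ l g * g⁻¹`, a central element, so that `θ l g = c g l * g`.
Since `θ` fixes the centre, `θ l₁ (θ l₂ g) = c g l₂ * θ l₁ g`, which makes `c g` a homomorphism
`Λ → Z`; centrality of `c g' l` gives `c (g * g') = c g * c g'`. Hence `c g = c g'` forces
`c (g * g'⁻¹) = 1`, i.e. `g * g'⁻¹` is `θ`-fixed.
-/

open Subgroup

namespace MulAut

variable {G Λ : Type*} [Group G] [Group Λ] (θ : Λ →* MulAut G)

def centralDisplacement (hZ : ∀ (l : Λ) (z : G), z ∈ center G → θ l z = z) (g : G)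
    (hg : ∀ l : Λ, θ l g * g⁻¹ ∈ center G) : Λ →* center G where
  toFun l := ⟨θ l g * g⁻¹, hg l⟩
  map_one' := by ext; simp
  map_mul' l₁ l₂ := by
    ext
    have hz₂ := hg l₂
    calc θ (l₁ * l₂) g * g⁻¹ = θ l₁ ((θ l₂ g * g⁻¹) * g) * g⁻¹ := by
          rw [inv_mul_cancel_right, map_mul, MulAut.mul_apply]
      _ = (θ l₂ g * g⁻¹) * (θ l₁ g * g⁻¹) := by rw [map_mul, hZ l₁ _ hz₂, mul_assoc]
      _ = (θ l₁ g * g⁻¹) * (θ l₂ g * g⁻¹) := (mem_center_iff.mp hz₂ _).symm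

/-- `c_θ`, restricted to a subgroup `K ≤ G_θ`. -/
def centralDisplacementHom (hZ : ∀ (l : Λ) (z : G), z ∈ center G → θ l z = z) (K : Subgroup G)
    (hK : ∀ g ∈ K, ∀ l : Λ, θ l g * g⁻¹ ∈ center G) : K →* (Λ →* center G) where
  toFun g := centralDisplacement θ hZ g (hK g g.2)
  map_one' := by ext; simp [centralDisplacement]
  map_mul' g g' := by
    ext l
    have hz' := mem_center_iff.mp (hK g' g'.2 l) (g : G)⁻¹
    show θ l (g * g' : G) * (g * g' : G)⁻¹ = (θ l g * (g : G)⁻¹) * (θ l g' * (g' : G)⁻¹)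
    calc θ l (g * g' : G) * (g * g' : G)⁻¹
        = θ l g * ((θ l g' * (g' : G)⁻¹) * (g : G)⁻¹) := by rw [map_mul]; group
      _ = (θ l g * (g : G)⁻¹) * (θ l g' * (g' : G)⁻¹) := by rw [← hz']; group

variable {θ}
variable {hZ : ∀ (l : Λ) (z : G), z ∈ center G → θ l z = z} {K : Subgroup G}
  {hK : ∀ g ∈ K, ∀ l : Λ, θ l g * g⁻¹ ∈ center G}

@[simp]
theorem coe_centralDisplacementHom_apply (g : K) (l : Λ) :
    ((centralDisplacementHom θ hZ K hK g l : center G) : G) = θ l (g : G) * (g : G)⁻¹ :=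
  rfl

theorem centralDisplacementHom_eq_one_iff {g : K} :
    centralDisplacementHom θ hZ K hK g = 1 ↔ ∀ l : Λ, θ l (g : G) = g := by
  simp only [DFunLike.ext_iff, MonoidHom.one_apply, Subtype.ext_iff,
    coe_centralDisplacementHom_apply, OneMemClass.coe_one, mul_inv_eq_one]

theorem apply_mul_inv_eq_of_centralDisplacementHom_eq {g g' : K}
    (h : centralDisplacementHom θ hZ K hK g = centralDisplacementHom θ hZ K hK g') (l : Λ) :
    θ l ((g : G) * (g' : G)⁻¹) = (g : G) * (g' : G)⁻¹ :=
  (centralDisplacementHom_eq_one_iff (g := g * g'⁻¹)).mp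
    (by rw [map_mul, map_inv, h, mul_inv_cancel]) l

end MulAut

open MulAut in
/-- Let `G` be a group with centre `Z`, `Λ` a group and `θ : Λ → Aut G` a
homomorphism fixing `Z` pointwise.  Let `K = G_θ` be the subgroup of elements `g` with
`θ l g * g⁻¹ ∈ Z` for all `l`.  Then `c_θ : G_θ → Hom(Λ, Z)`, `c_θ(g)(l) = θ l g * g⁻¹`,
is a group homomorphism whose kernel is exactly `G^θ`; in particular the sequence
`1 → G^θ → G_θ → Hom(Λ,Z)` is exact and `c_θ` induces an injection `G_θ/G^θ ↪ Hom(Λ,Z)`. -/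
theorem stmt_4 {G Λ : Type*} [Group G] [Group Λ] (θ : Λ →* MulAut G)
    (hZ : ∀ (l : Λ) (z : G), z ∈ Subgroup.center G → θ l z = z)
    (K : Subgroup G)
    (hK : (K : Set G) = {g : G | ∀ l : Λ, θ l g * g⁻¹ ∈ Subgroup.center G}) :
    ∃ c : K →* (Λ →* Subgroup.center G),
      (∀ (g : K) (l : Λ), ((c g l : Subgroup.center G) : G) = θ l (g : G) * (g : G)⁻¹) ∧
      (∀ g : K, c g = 1 ↔ ∀ l : Λ, θ l (g : G) = (g : G)) ∧
      (∀ g g' : K, c g = c g' →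
        ∀ l : Λ, θ l ((g : G) * (g' : G)⁻¹) = (g : G) * (g' : G)⁻¹) := by
  have hK' : ∀ g ∈ K, ∀ l : Λ, θ l g * g⁻¹ ∈ center G := fun g hg =>
    (Set.ext_iff.mp hK g).mp hg
  exact ⟨centralDisplacementHom θ hZ K hK', coe_centralDisplacementHom_apply,
    fun _ => centralDisplacementHom_eq_one_iff,
    fun _ _ => apply_mul_inv_eq_of_centralDisplacementHom_eq⟩
end

section
/- Let Λ be a commutative group, l an antisymmetric pairing on Λ, and Δ, Δ' two maximal isotropic subgroups of Λ. Then the kernel of the homomorphism Δ' → Hom(Δ,ℂˣ) sending δ' to the restriction of l(δ') to Δ equals Δ ∩ Δ'; moreover, for every δ' ∈ Δ' the character l(δ')|_Δ is trivial on Δ ∩ Δ', so that l induces an injective homomorphism from Δ'/(Δ ∩ Δ') into Hom(Δ/(Δ ∩ Δ'), ℂˣ). -/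
/-- An antisymmetric pairing on a commutative group `Λ` is a homomorphism
`l : Λ → Λ* = Hom(Λ, ℂˣ)` with `l x x = 1` for all `x`. -/
def IsAntisymPairing {Λ : Type*} [CommGroup Λ] (l : Λ →* (Λ →* ℂˣ)) : Prop :=
  ∀ x : Λ, l x x = 1

/-- A subgroup `Δ ≤ Λ` is isotropic for `l` if `l` pairs any two of its elements trivially. -/
def IsIsotropic {Λ : Type*} [CommGroup Λ] (l : Λ →* (Λ →* ℂˣ)) (Δ : Subgroup Λ) : Prop :=
  ∀ x ∈ Δ, ∀ y ∈ Δ, l x y = 1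

/-- A subgroup is maximal isotropic if it is isotropic and not properly contained in any
isotropic subgroup. -/
def IsMaxIsotropic {Λ : Type*} [CommGroup Λ] (l : Λ →* (Λ →* ℂˣ)) (Δ : Subgroup Λ) : Prop :=
  IsIsotropic l Δ ∧ ∀ Δ' : Subgroup Λ, IsIsotropic l Δ' → Δ ≤ Δ' → Δ' = Δ

/-!
A maximal isotropic subgroup `Δ` is its own orthogonal: if `x` pairs trivially with `Δ`, then
`Δ ⊔ ⟨x⟩` is still isotropic (antisymmetry gives `l x x = 1` and `l d x = (l x d)⁻¹ = 1`), so by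
maximality `x ∈ Δ`. Applied to `x ∈ Δ'`, this identifies the kernel of `δ' ↦ (l δ')|_Δ` with
`Δ ⊓ Δ'`; the remaining claims follow from isotropy of `Δ'` and multiplicativity of `l`.
-/

section

variable {Λ : Type*} [CommGroup Λ] {l : Λ →* (Λ →* ℂˣ)}

namespace IsAntisymPairing

theorem apply_swap (hl : IsAntisymPairing l) (x y : Λ) : l y x = (l x y)⁻¹ := by
  have h := hl (x * y)
  simp only [map_mul, MonoidHom.mul_apply, hl x, hl y, one_mul, mul_one] at h
  exact eq_inv_of_mul_eq_one_left h

theorem isIsotropic_sup_zpowers (hl : IsAntisymPairing l) {Δ : Subgroup Λ}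
    (hΔ : IsIsotropic l Δ) {x : Λ} (hx : ∀ d ∈ Δ, l x d = 1) :
    IsIsotropic l (Δ ⊔ Subgroup.zpowers x) := by
  have hx' : ∀ d ∈ Δ, l d x = 1 := fun d hd => by rw [hl.apply_swap, hx d hd, inv_one]
  intro a ha b hb
  obtain ⟨d₁, hd₁, _, ⟨m, rfl⟩, rfl⟩ := Subgroup.mem_sup.mp ha
  obtain ⟨d₂, hd₂, _, ⟨n, rfl⟩, rfl⟩ := Subgroup.mem_sup.mp hb
  simp [hΔ d₁ hd₁ d₂ hd₂, hx d₂ hd₂, hx' d₁ hd₁, hl x]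

end IsAntisymPairing

theorem IsMaxIsotropic.mem_iff (hl : IsAntisymPairing l) {Δ : Subgroup Λ}
    (hΔ : IsMaxIsotropic l Δ) {x : Λ} : x ∈ Δ ↔ ∀ d ∈ Δ, l x d = 1 := by
  refine ⟨fun hxΔ => hΔ.1 x hxΔ, fun hx => ?_⟩
  have hsup := hΔ.2 _ (hl.isIsotropic_sup_zpowers hΔ.1 hx) le_sup_left
  exact hsup ▸ Subgroup.mem_sup_right (Subgroup.mem_zpowers x)

end

/-- For two maximal isotropic subgroups `Δ, Δ'` of an antisymmetric pairing
`l` on a commutative group `Λ`:  the kernel of `Δ' → Hom(Δ, ℂˣ)`, `δ' ↦ (l δ')|_Δ`, equals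
`Δ ⊓ Δ'`; each character `(l δ')|_Δ` is trivial on `Δ ⊓ Δ'` (and constant on its cosets);
and `l` induces an injection `Δ'/(Δ ⊓ Δ') ↪ Hom(Δ/(Δ ⊓ Δ'), ℂˣ)`. -/
theorem stmt_6 {Λ : Type*} [CommGroup Λ] (l : Λ →* (Λ →* ℂˣ))
    (hl : IsAntisymPairing l) (Δ Δ' : Subgroup Λ)
    (hΔ : IsMaxIsotropic l Δ) (hΔ' : IsMaxIsotropic l Δ') :
    (∀ x ∈ Δ', ((∀ d ∈ Δ, l x d = 1) ↔ x ∈ Δ ⊓ Δ')) ∧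
    (∀ x ∈ Δ', ∀ y ∈ Δ ⊓ Δ', l x y = 1) ∧
    (∀ x ∈ Δ', ∀ d₁ ∈ Δ, ∀ d₂ ∈ Δ, d₁ * d₂⁻¹ ∈ Δ ⊓ Δ' → l x d₁ = l x d₂) ∧
    (∀ x ∈ Δ', ∀ y ∈ Δ', (∀ d ∈ Δ, l x d = l y d) → x * y⁻¹ ∈ Δ ⊓ Δ') := by
  refine ⟨?_, ?_, ?_, ?_⟩
  · intro x hx
    rw [Subgroup.mem_inf, hΔ.mem_iff hl]
    exact ⟨fun h => ⟨h, hx⟩, And.left⟩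
  · exact fun x hx y hy => hΔ'.1 x hx y hy.2
  · intro x hx d₁ _ d₂ _ hd
    have h := hΔ'.1 x hx _ hd.2
    rw [map_mul, map_inv] at h
    exact mul_inv_eq_one.mp h
  · intro x hx y hy h
    refine ⟨(hΔ.mem_iff hl).mpr fun d hd => ?_, Δ'.mul_mem hx (Δ'.inv_mem hy)⟩
    rw [map_mul, map_inv, MonoidHom.mul_apply, MonoidHom.inv_apply, h d hd, mul_inv_cancel]
end

section
/- Let Λ be a finite commutative group, l an antisymmetric pairing on Λ, and Δ, Δ' two maximal isotropic subgroups of Λ. Then Δ and Δ' have the same cardinality. -/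
/-!
Restricting `l` gives a homomorphism `Δ → Hom(Δ', ℂˣ)`. Its kernel is `Δ ∩ Δ'`, because an
element of `Δ` pairing trivially with `Δ'` can be adjoined to `Δ'` without destroying isotropy,
and so lies in `Δ'` by maximality. Its image consists of characters trivial on `Δ ∩ Δ'`, of which
there are `[Δ' : Δ ∩ Δ']` by duality of finite abelian groups. Hence
`[Δ : Δ ∩ Δ'] ≤ [Δ' : Δ ∩ Δ']`, and by symmetry the two indices, hence `|Δ|` and `|Δ'|`, agree.
-/

theorem Subgroup.card_inf_mul_relIndex {G : Type*} [Group G] (H K : Subgroup G) :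
    Nat.card ↥(H ⊓ K) * H.relIndex K = Nat.card K := by
  simpa [relIndex_bot_left] using relIndex_inf_mul_relIndex (⊥ : Subgroup G) H K

section

open MonoidHom

variable {Λ : Type*} [CommGroup Λ] {l : Λ →* (Λ →* ℂˣ)}

theorem IsAntisymPairing.apply_swap_s7 (hl : IsAntisymPairing l) (x y : Λ) :
    l y x = (l x y)⁻¹ := by
  have h := hl (x * y)
  simp only [map_mul, mul_apply, hl x, hl y, one_mul, mul_one] at h
  exact eq_inv_of_mul_eq_one_right h

theorem IsIsotropic.sup_zpowers (hl : IsAntisymPairing l) {Δ : Subgroup Λ}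
    (hΔ : IsIsotropic l Δ) {x : Λ} (hx : ∀ y ∈ Δ, l x y = 1) :
    IsIsotropic l (Δ ⊔ Subgroup.zpowers x) := by
  have hx' : ∀ y ∈ Δ, l y x = 1 := fun y hy => by rw [hl.apply_swap_s7, hx y hy, inv_one]
  intro _ hy _ hz
  obtain ⟨a, ha, _, ⟨m, rfl⟩, rfl⟩ := Subgroup.mem_sup.mp hy
  obtain ⟨b, hb, _, ⟨n, rfl⟩, rfl⟩ := Subgroup.mem_sup.mp hz
  simp [map_mul, map_zpow, mul_apply, zpow_apply, hΔ a ha b hb, hx b hb, hx' a ha, hl x]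

theorem IsMaxIsotropic.mem_of_forall_apply_eq_one (hl : IsAntisymPairing l) {Δ : Subgroup Λ}
    (hΔ : IsMaxIsotropic l Δ) {x : Λ} (hx : ∀ y ∈ Δ, l x y = 1) : x ∈ Δ := by
  rw [← hΔ.2 _ (hΔ.1.sup_zpowers hl hx) le_sup_left]
  exact Subgroup.mem_sup_right (Subgroup.mem_zpowers x)

theorem IsMaxIsotropic.relIndex_le [Finite Λ] (hl : IsAntisymPairing l) {Δ Δ' : Subgroup Λ}
    (hΔ : IsIsotropic l Δ) (hΔ' : IsMaxIsotropic l Δ') :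
    Δ'.relIndex Δ ≤ Δ.relIndex Δ' := by
  let φ : Δ →* (Δ' →* ℂˣ) := (domRestrictHom Δ' ℂˣ).comp (l.comp Δ.subtype)
  have hker : φ.ker = Δ'.subgroupOf Δ := by
    ext x
    simp only [mem_ker, φ, comp_apply, domRestrictHom_apply, domRestrict_eq_one_iff,
      Subgroup.coe_subtype, Subgroup.mem_subgroupOf]
    exact ⟨hΔ'.mem_of_forall_apply_eq_one hl, fun hx y hy => hΔ'.1 x hx y hy⟩
  have hrange : φ.range ≤ (domRestrictHom (Δ.subgroupOf Δ') ℂˣ).ker := by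
    rintro _ ⟨x, rfl⟩
    simp only [mem_ker, domRestrictHom_apply, domRestrict_eq_one_iff, Subgroup.mem_subgroupOf]
    exact fun y hy => hΔ x x.2 y hy
  calc Δ'.relIndex Δ = Nat.card φ.range := by rw [Subgroup.relIndex, ← hker, Subgroup.index_ker]
    _ ≤ Nat.card (domRestrictHom (Δ.subgroupOf Δ') ℂˣ).ker := Subgroup.card_le_of_le hrange
    _ = Δ.relIndex Δ' := CommGroup.card_domRestrictHom_ker ℂ _

end

/-- Two maximal isotropic subgroups of an antisymmetric pairing on a finite
commutative group have the same cardinality. -/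
theorem stmt_7 {Λ : Type*} [CommGroup Λ] [Finite Λ] (l : Λ →* (Λ →* ℂˣ))
    (hl : IsAntisymPairing l) (Δ Δ' : Subgroup Λ)
    (hΔ : IsMaxIsotropic l Δ) (hΔ' : IsMaxIsotropic l Δ') :
    Nat.card Δ = Nat.card Δ' := by
  have h : Δ'.relIndex Δ = Δ.relIndex Δ' :=
    le_antisymm (hΔ'.relIndex_le hl hΔ.1) (hΔ.relIndex_le hl hΔ'.1)
  rw [← Δ'.card_inf_mul_relIndex Δ, ← Δ.card_inf_mul_relIndex Δ', h, inf_comm]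
end

section
/- Let r ≥ 1, let ζ ∈ ℂ be a primitive r-th root of unity, let p₁,…,p_r be natural numbers with p₁+…+p_r = n ≥ 1, and let M ∈ GL(n,ℂ) be the block-diagonal matrix M = diag(I_{p₁}, ζ·I_{p₂}, …, ζ^{r-1}·I_{p_r}). Then there exists A ∈ GL(n,ℂ) with M·A·M⁻¹ = ζ·A if and only if p₁ = p₂ = … = p_r. -/
/-!
Conjugating by `M = diag(ζ^deg x)` multiplies the entry `A x y` by `ζ^(deg x - deg y)`, so
`M A M⁻¹ = ζ A` says exactly that `A` maps block `k` into block `k + 1`. If `A` is invertible,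
the `(k, k)` block of `A⁻¹ A = 1` factors through block `k + 1`, so `p k ≤ p (k + 1)` for every
`k`; going once around the cycle forces equality. Conversely, when all blocks have the same size,
the permutation matrix of the cyclic shift of blocks works.
-/

open Matrix

theorem Matrix.inv_diagonal_eq_diagonal_inv {ι K : Type*} [Fintype ι] [DecidableEq ι]
    [Field K] {d : ι → K} (hd : ∀ x, d x ≠ 0) :
    (diagonal d)⁻¹ = diagonal fun x => (d x)⁻¹ :=
  inv_eq_right_inv <| by simp [diagonal_mul_diagonal, hd]

theorem Matrix.diagonal_mul_mul_inv_diagonal_eq_smul_iff {ι K : Type*} [Fintype ι] [DecidableEq ι]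
    [Field K] {d : ι → K} (hd : ∀ x, d x ≠ 0) (c : K) (A : Matrix ι ι K) :
    diagonal d * A * (diagonal d)⁻¹ = c • A ↔ ∀ x y, A x y ≠ 0 → d x = c * d y := by
  simp only [inv_diagonal_eq_diagonal_inv hd, ← Matrix.ext_iff, mul_diagonal, diagonal_mul,
    smul_apply, smul_eq_mul]
  refine forall₂_congr fun x y => ?_
  rw [ne_eq, ← or_iff_not_imp_left, mul_inv_eq_iff_eq_mul₀ (hd y),
    show c * A x y * d y = A x y * (c * d y) by ring, mul_comm (d x), mul_eq_mul_left_iff, or_comm]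

theorem IsPrimitiveRoot.pow_val_eq_mul_pow_val_iff {M : Type*} [CommMonoid M] {r : ℕ} [NeZero r]
    {ζ : M} (hζ : IsPrimitiveRoot ζ r) (a b : Fin r) :
    ζ ^ (a : ℕ) = ζ * ζ ^ (b : ℕ) ↔ a = b + 1 := by
  have hval : ((b + 1 : Fin r) : ℕ) = ((b : ℕ) + 1) % r := by simp [Fin.val_add]
  rw [← pow_succ', pow_eq_pow_mod ((b : ℕ) + 1) hζ.pow_eq_one, ← hval, Fin.ext_iff]
  exact ⟨fun h => hζ.pow_inj a.isLt (b + 1).isLt h, fun h => h ▸ rfl⟩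

theorem Fin.forall_eq_of_le_add_one {r : ℕ} [NeZero r] {p : Fin r → ℕ}
    (hp : ∀ k, p k ≤ p (k + 1)) (k k' : Fin r) : p k = p k' := by
  have hsum : ∑ k, p k = ∑ k, p (k + 1) := (Equiv.sum_comp (Equiv.addRight 1) p).symm
  have hstep := (Finset.sum_eq_sum_iff_of_le fun k _ => hp k).1 hsum
  obtain ⟨n, rfl⟩ : ∃ n, r = n + 1 := Nat.exists_eq_succ_of_ne_zero (NeZero.ne r)
  suffices h : ∀ k, p k = p 0 by rw [h k, h k']
  refine Fin.induction rfl fun i hi => ?_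
  rw [← Fin.coeSucc_eq_succ, ← hstep _ (Finset.mem_univ _), hi]

theorem Matrix.card_le_card_of_isUnit_of_apply_ne_zero {κ R : Type*} [Fintype κ] [DecidableEq κ]
    {β : κ → Type*} [∀ k, Fintype (β k)] [∀ k, DecidableEq (β k)] [CommRing R] [Nontrivial R]
    {A : Matrix (Σ k, β k) (Σ k, β k) R} (hA : IsUnit A) {f : κ → κ}
    (hf : ∀ x y, A x y ≠ 0 → x.1 = f y.1) (k : κ) :
    Fintype.card (β k) ≤ Fintype.card (β (f k)) := by
  set B := A⁻¹.submatrix (Sigma.mk k) (Sigma.mk (f k))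
  set C := A.submatrix (Sigma.mk (f k)) (Sigma.mk k)
  have hBC : B * C = 1 := by
    ext i j
    calc (B * C) i j = ∑ x, A⁻¹ ⟨k, i⟩ x * A x ⟨k, j⟩ := by
          rw [Fintype.sum_sigma, Finset.sum_eq_single (f k)]
          · rfl
          · intro l _ hl
            refine Finset.sum_eq_zero fun m _ => ?_
            by_contra hne
            exact hl (hf _ _ (right_ne_zero_of_mul hne))
          · simp
      _ = (A⁻¹ * A) ⟨k, i⟩ ⟨k, j⟩ := rfl
      _ = (1 : Matrix (β k) (β k) R) i j := by
          rw [nonsing_inv_mul _ ((isUnit_iff_isUnit_det A).1 hA), one_apply, one_apply]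
          simp
  calc Fintype.card (β k) = (1 : Matrix (β k) (β k) R).rank := rank_one.symm
    _ = (B * C).rank := by rw [hBC]
    _ ≤ C.rank := rank_mul_le_right _ _
    _ ≤ Fintype.card (β (f k)) := rank_le_card_height _

theorem Equiv.Perm.isUnit_permMatrix {n R : Type*} [Fintype n] [DecidableEq n] [CommRing R]
    (σ : Equiv.Perm n) : IsUnit (σ.permMatrix R) := by
  rw [isUnit_iff_isUnit_det, det_permutation]
  exact (Equiv.Perm.sign σ).isUnit.map (Int.castRingHom R)

theorem Equiv.Perm.apply_eq_of_permMatrix_apply_ne_zero {n R : Type*} [DecidableEq n] [Zero R]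
    [One R] {σ : Equiv.Perm n} {x y : n} (h : σ.permMatrix R x y ≠ 0) : σ x = y := by
  by_contra hne
  simp [PEquiv.toMatrix_apply, hne] at h

theorem stmt_13_general {r : ℕ} (hr : 1 ≤ r) {ζ : ℂ} (hζ : IsPrimitiveRoot ζ r)
    (p : Fin r → ℕ) :
    (∃ A : Matrix (Σ k : Fin r, Fin (p k)) (Σ k : Fin r, Fin (p k)) ℂ,
        IsUnit A ∧
        Matrix.diagonal (fun x : Σ k : Fin r, Fin (p k) => ζ ^ (x.1 : ℕ)) * A *
            (Matrix.diagonal (fun x : Σ k : Fin r, Fin (p k) => ζ ^ (x.1 : ℕ)))⁻¹ =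
          ζ • A) ↔
      ∀ k k' : Fin r, p k = p k' := by
  have : NeZero r := ⟨by omega⟩
  have hconj (A : Matrix (Σ k : Fin r, Fin (p k)) (Σ k : Fin r, Fin (p k)) ℂ) :=
    diagonal_mul_mul_inv_diagonal_eq_smul_iff (d := fun x => ζ ^ (x.1 : ℕ))
      (fun _ => pow_ne_zero _ (hζ.ne_zero (NeZero.ne r))) ζ A
  simp only [hζ.pow_val_eq_mul_pow_val_iff] at hconj
  constructor
  · rintro ⟨A, hA, hAζ⟩
    refine Fin.forall_eq_of_le_add_one fun k => ?_
    simpa using card_le_card_of_isUnit_of_apply_ne_zero hA (f := (· + 1)) ((hconj A).1 hAζ) k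
  · intro hp
    -- `σ.permMatrix` has its nonzero entries at `(x, σ x)`, so `σ` must lower the block index.
    let σ : Equiv.Perm (Σ k : Fin r, Fin (p k)) :=
      Equiv.sigmaCongr (Equiv.subRight 1) fun k => finCongr (hp k (k - 1))
    refine ⟨σ.permMatrix ℂ, σ.isUnit_permMatrix, (hconj _).2 fun x y hxy => ?_⟩
    rw [← Equiv.Perm.apply_eq_of_permMatrix_apply_ne_zero hxy]
    exact (sub_add_cancel x.1 1).symm

/-- Let `ζ` be a primitive `r`-th root of unity and
`M = diag(I_{p₁}, ζ I_{p₂}, …, ζ^{r-1} I_{p_r})` (a block-diagonal matrix indexed by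
`Σ k : Fin r, Fin (p k)`, with `p₁ + … + p_r = n ≥ 1`).  Then there exists an invertible
matrix `A` with `M A M⁻¹ = ζ • A` if and only if `p₁ = p₂ = … = p_r`. -/
theorem stmt_13 {r : ℕ} (hr : 1 ≤ r) {ζ : ℂ} (hζ : IsPrimitiveRoot ζ r)
    (p : Fin r → ℕ) (hn : 1 ≤ ∑ k, p k) :
    (∃ A : Matrix (Σ k : Fin r, Fin (p k)) (Σ k : Fin r, Fin (p k)) ℂ,
        IsUnit A ∧
        Matrix.diagonal (fun x : Σ k : Fin r, Fin (p k) => ζ ^ (x.1 : ℕ)) * A *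
            (Matrix.diagonal (fun x : Σ k : Fin r, Fin (p k) => ζ ^ (x.1 : ℕ)))⁻¹ =
          ζ • A) ↔
      ∀ k k' : Fin r, p k = p k' :=
  stmt_13_general hr hζ p
end

section
/- Let r ≥ 1, m ≥ 1, n = r·m, let ζ ∈ ℂ be a primitive r-th root of unity, let M = diag(I_m, ζ·I_m, …, ζ^{r-1}·I_m) ∈ GL(n,ℂ), and let S ∈ GL(n,ℂ) be the block cyclic permutation matrix with r×r block structure whose (i, i+1 mod r) blocks equal I_m and all other blocks are zero. Then for every A ∈ GL(n,ℂ) and every integer k: M·A·M⁻¹ = ζ^k·A if and only if A·S^k is block diagonal (i.e. A·S^k preserves each of the r coordinate blocks of ℂⁿ). In particular the group {A ∈ GL(n,ℂ) : M·A·M⁻¹·A⁻¹ is a scalar matrix} is generated by the block-diagonal subgroup GL(m,ℂ)^r and S. -/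
/-!
Conjugation by `M = diag(ζ^i)` multiplies the entry of `A` at `(x, y)` by `ζ^(x.1 - y.1)`. Since
`ζ` is a primitive `r`-th root of unity, `M A M⁻¹ = ζ^k A` therefore says exactly that `A` is
supported on the entries with `x.1 = y.1 + k`, and right multiplication by `S^k` moves those
entries onto the block diagonal. If `M A M⁻¹ A⁻¹ = z` is scalar, comparing a nonzero entry of `A`
forces `z = ζ^(x.1 - y.1)`. So the group in question consists of the units twisted by some power
of `ζ`; they form a subgroup containing the block-diagonal units and `S`, and each of them is a
block-diagonal unit times a power of `S`.
-/

open Fin.CommRing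

namespace Matrix

variable {ι K : Type*} [Fintype ι] [DecidableEq ι] [Field K]

lemma inv_diagonal_of_ne_zero {d : ι → K} (hd : ∀ i, d i ≠ 0) :
    (diagonal d)⁻¹ = diagonal fun i ↦ (d i)⁻¹ :=
  inv_eq_right_inv <| by
    rw [diagonal_mul_diagonal, ← diagonal_one]
    exact congrArg diagonal (funext fun i ↦ mul_inv_cancel₀ (hd i))

lemma diagonal_mul_mul_inv_diagonal_eq_smul_iff_s14 {d : ι → K} (hd : ∀ i, d i ≠ 0)
    (A : Matrix ι ι K) (c : K) :
    diagonal d * A * (diagonal d)⁻¹ = c • A ↔ ∀ i j, A i j ≠ 0 → d i = c * d j := by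
  rw [inv_diagonal_of_ne_zero hd, ← ext_iff]
  refine forall₂_congr fun i j ↦ ?_
  rw [mul_diagonal, diagonal_mul, smul_apply, smul_eq_mul]
  by_cases hA : A i j = 0
  · simp [hA]
  · rw [mul_right_comm, mul_left_inj' hA, mul_inv_eq_iff_eq_mul₀ (hd j)]
    exact ⟨fun h _ ↦ h, fun h ↦ h hA⟩

theorem exists_zpow_of_diagonal_pow_mul_mul_inv_eq_smul {ζ : K} (hζ : ζ ≠ 0) (e : ι → ℕ)
    {A : Matrix ι ι K} (hA : A ≠ 0) {z : K}
    (h : diagonal (fun i ↦ ζ ^ e i) * A * (diagonal fun i ↦ ζ ^ e i)⁻¹ = z • A) :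
    ∃ k : ℤ, z = ζ ^ k := by
  obtain ⟨i, j, hij⟩ : ∃ i j, A i j ≠ 0 := by simpa [← ext_iff] using hA
  have hd :=
    (diagonal_mul_mul_inv_diagonal_eq_smul_iff_s14 (fun _ ↦ pow_ne_zero _ hζ) A z).mp h i j hij
  refine ⟨(e i : ℤ) - e j, ?_⟩
  rw [zpow_sub₀ hζ, zpow_natCast, zpow_natCast, hd, mul_div_cancel_right₀ _ (pow_ne_zero _ hζ)]

theorem exists_diagonal_pow_mul_mul_inv_mul_inv_eq_smul_one_iff [Nonempty ι] {ζ : K}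
    (hζ : ζ ≠ 0) (e : ι → ℕ) (A : (Matrix ι ι K)ˣ) :
    (∃ z : K,
        diagonal (fun i ↦ ζ ^ e i) * A.val * (diagonal fun i ↦ ζ ^ e i)⁻¹ * A⁻¹.val = z • 1) ↔
      ∃ k : ℤ,
        diagonal (fun i ↦ ζ ^ e i) * A.val * (diagonal fun i ↦ ζ ^ e i)⁻¹ = ζ ^ k • A.val := by
  simp only [Units.mul_inv_eq_iff_eq_mul, smul_one_mul]
  constructor
  · rintro ⟨z, hz⟩
    obtain ⟨k, rfl⟩ := exists_zpow_of_diagonal_pow_mul_mul_inv_eq_smul hζ e A.ne_zero hz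
    exact ⟨k, hz⟩
  · rintro ⟨k, hk⟩
    exact ⟨_, hk⟩

end Matrix

lemma IsPrimitiveRoot.pow_val_eq_zpow_mul_pow_val_iff {K : Type*} [Field K] {r : ℕ} [NeZero r]
    {ζ : K} (hζ : IsPrimitiveRoot ζ r) (a b : Fin r) (k : ℤ) :
    ζ ^ (a : ℕ) = ζ ^ k * ζ ^ (b : ℕ) ↔ a = b + k := by
  have hζ0 : ζ ≠ 0 := hζ.ne_zero (NeZero.ne r)
  rw [← zpow_natCast, ← zpow_natCast, ← zpow_add₀ hζ0, ← div_eq_one_iff_eq (zpow_ne_zero _ hζ0),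
    ← zpow_sub₀ hζ0, hζ.zpow_eq_one_iff_dvd, ← sub_eq_zero (a := a),
    ← CharP.intCast_eq_zero_iff (Fin r) r]
  push_cast [Fin.cast_val_eq_self]
  ring_nf

section BlockShift

variable (r : ℕ) [NeZero r] (β : Type*)

def blockShift : Equiv.Perm (Fin r × β) :=
  (Equiv.addRight 1).prodCongr (Equiv.refl β)

variable (R : Type*) [Semiring R] [Fintype β] [DecidableEq β] in
/-- `permMatrixHom` sends `σ` to the matrix of `σ⁻¹`, so this is the permutation matrix of
`blockShift r β`. -/
def blockShiftUnit : (Matrix (Fin r × β) (Fin r × β) R)ˣ :=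
  (Matrix.permMatrixHom (n := Fin r × β) (R := R)).toHomUnits (blockShift r β)⁻¹

variable {r β}

@[simp]
lemma blockShift_apply (x : Fin r × β) : blockShift r β x = (x.1 + 1, x.2) :=
  rfl

lemma blockShift_zpow_apply (k : ℤ) (x : Fin r × β) :
    (blockShift r β ^ k) x = (x.1 + k, x.2) := by
  induction k using Int.induction_on generalizing x with
  | zero => simp
  | succ k ih =>
    rw [_root_.zpow_add_one, Equiv.Perm.mul_apply, ih, blockShift_apply]
    exact Prod.ext (by push_cast; ring) rfl
  | pred k ih =>
    obtain ⟨y, rfl⟩ := (blockShift r β).surjective x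
    rw [_root_.zpow_sub_one, Equiv.Perm.mul_apply, Equiv.Perm.inv_def, Equiv.symm_apply_apply, ih,
      blockShift_apply]
    exact Prod.ext (by push_cast; ring) rfl

variable {R : Type*} [Semiring R] [Fintype β] [DecidableEq β]

lemma val_blockShiftUnit_zpow (k : ℤ) :
    (blockShiftUnit r β R ^ k).val = (blockShift r β ^ k).permMatrix R := by
  rw [blockShiftUnit, ← map_zpow, inv_zpow, MonoidHom.coe_toHomUnits, Matrix.permMatrixHom_apply,
    inv_inv]

lemma val_blockShiftUnit :
    (blockShiftUnit r β R).val =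
      Matrix.of fun x y ↦ if y.1 = x.1 + 1 ∧ x.2 = y.2 then 1 else 0 := by
  ext x y
  simpa [PEquiv.toMatrix_apply, Prod.ext_iff, eq_comm (a := x.1 + 1)] using
    congrFun₂ (val_blockShiftUnit_zpow (R := R) 1) x y

lemma mul_val_blockShiftUnit_zpow_apply (A : Matrix (Fin r × β) (Fin r × β) R) (k : ℤ)
    (x y : Fin r × β) :
    (A * (blockShiftUnit r β R ^ k).val) x y = A x (y.1 - k, y.2) := by
  rw [val_blockShiftUnit_zpow, PEquiv.mul_toMatrix_toPEquiv, Matrix.submatrix_apply, id,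
    ← Equiv.Perm.inv_def, ← zpow_neg, blockShift_zpow_apply, Int.cast_neg, ← sub_eq_add_neg]

lemma blockDiagonal_mul_blockShiftUnit_zpow_iff (A : Matrix (Fin r × β) (Fin r × β) R) (k : ℤ) :
    (∀ x y : Fin r × β, x.1 ≠ y.1 → (A * (blockShiftUnit r β R ^ k).val) x y = 0) ↔
      ∀ x y, A x y ≠ 0 → x.1 = y.1 + k := by
  simp only [mul_val_blockShiftUnit_zpow_apply]
  constructor
  · intro h x y hxy
    by_contra hne
    exact hxy (by simpa using h x (y.1 + k, y.2) hne)
  · intro h x y hne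
    by_contra hxy
    exact hne (by simpa using h x _ hxy)

end BlockShift

lemma Subgroup.mem_closure_union_singleton_of_mul_zpow_mem {G : Type*} [Group G] {s : Set G}
    {g a : G} {k : ℤ} (h : a * g ^ k ∈ s) : a ∈ closure (s ∪ {g}) := by
  rw [← mul_inv_cancel_right a (g ^ k)]
  exact mul_mem (subset_closure (Set.mem_union_left _ h))
    (inv_mem (zpow_mem (subset_closure (Set.mem_union_right _ (Set.mem_singleton g))) k))

section TwistSubgroup

variable {K R : Type*} [Field K] [Ring R] [Algebra K R]

def twistSubgroup (u : Rˣ) {ζ : K} (hζ : ζ ≠ 0) : Subgroup Rˣ where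
  carrier := {a | ∃ k : ℤ, (u * a * u⁻¹ : R) = ζ ^ k • (a : R)}
  one_mem' := ⟨0, by simp⟩
  mul_mem' := by
    rintro a b ⟨i, ha⟩ ⟨j, hb⟩
    refine ⟨i + j, ?_⟩
    calc (u * ↑(a * b) * ↑u⁻¹ : R) = (u * a * ↑u⁻¹) * (u * b * ↑u⁻¹) := by
          simp only [Units.val_mul, mul_assoc, Units.inv_mul_cancel_left]
      _ = ζ ^ (i + j) • ↑(a * b) := by
          rw [ha, hb, smul_mul_smul_comm, zpow_add₀ hζ, Units.val_mul]
  inv_mem' := by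
    rintro a ⟨i, ha⟩
    refine ⟨-i, (Units.mul_left_inj (u * a * u⁻¹)).mp ?_⟩
    calc (u * ↑a⁻¹ * ↑u⁻¹ * ↑(u * a * u⁻¹) : R) = 1 := by
          simp only [Units.val_mul, mul_assoc, Units.inv_mul_cancel_left, Units.mul_inv]
      _ = ζ ^ (-i) • ↑a⁻¹ * ↑(u * a * u⁻¹) := by
          rw [Units.val_mul, Units.val_mul, ha, smul_mul_smul_comm, ← zpow_add₀ hζ,
            neg_add_cancel, zpow_zero, one_smul, Units.inv_mul]

lemma mem_twistSubgroup {u : Rˣ} {ζ : K} (hζ : ζ ≠ 0) {a : Rˣ} :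
    a ∈ twistSubgroup u hζ ↔ ∃ k : ℤ, (u * a * u⁻¹ : R) = ζ ^ k • (a : R) :=
  Iff.rfl

end TwistSubgroup

section ClockAndShift

open Matrix

variable {K : Type*} [Field K] {r : ℕ} [NeZero r] {β : Type*} [Fintype β] [DecidableEq β]

theorem diagonal_pow_mul_mul_inv_eq_zpow_smul_iff {ζ : K} (hζ : IsPrimitiveRoot ζ r)
    (A : Matrix (Fin r × β) (Fin r × β) K) (k : ℤ) :
    diagonal (fun x : Fin r × β ↦ ζ ^ (x.1 : ℕ)) * A * (diagonal fun x ↦ ζ ^ (x.1 : ℕ))⁻¹ =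
        ζ ^ k • A ↔
      ∀ x y : Fin r × β, x.1 ≠ y.1 → (A * (blockShiftUnit r β K ^ k).val) x y = 0 := by
  rw [diagonal_mul_mul_inv_diagonal_eq_smul_iff_s14 fun _ ↦ pow_ne_zero _ (hζ.ne_zero (NeZero.ne r)),
    blockDiagonal_mul_blockShiftUnit_zpow_iff]
  simp only [hζ.pow_val_eq_zpow_mul_pow_val_iff]

theorem mem_closure_blockDiagonal_union_blockShiftUnit_iff {ζ : K} (hζ : IsPrimitiveRoot ζ r)
    (A : (Matrix (Fin r × β) (Fin r × β) K)ˣ) :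
    A ∈ Subgroup.closure ({B | ∀ x y : Fin r × β, x.1 ≠ y.1 → B.val x y = 0} ∪
        {blockShiftUnit r β K}) ↔
      ∃ k : ℤ, diagonal (fun x : Fin r × β ↦ ζ ^ (x.1 : ℕ)) * A.val *
        (diagonal fun x ↦ ζ ^ (x.1 : ℕ))⁻¹ = ζ ^ k • A.val := by
  have hζ0 : ζ ≠ 0 := hζ.ne_zero (NeZero.ne r)
  obtain ⟨u, hu⟩ : IsUnit (diagonal fun x : Fin r × β ↦ ζ ^ (x.1 : ℕ)) :=
    isUnit_diagonal.mpr (Pi.isUnit_iff.mpr fun _ ↦ (pow_ne_zero _ hζ0).isUnit)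
  have key (B : (Matrix (Fin r × β) (Fin r × β) K)ˣ) :
      B ∈ twistSubgroup u hζ0 ↔ ∃ k : ℤ, ∀ x y : Fin r × β, x.1 ≠ y.1 →
        (B * blockShiftUnit r β K ^ k).val x y = 0 := by
    simp only [mem_twistSubgroup, coe_units_inv, hu, Units.val_mul,
      diagonal_pow_mul_mul_inv_eq_zpow_smul_iff hζ]
  rw [← hu, ← coe_units_inv, ← mem_twistSubgroup hζ0]
  constructor
  · refine fun hA ↦ Subgroup.closure_le _ |>.mpr ?_ hA
    rintro B (hB | rfl)
    · exact (key B).mpr ⟨0, by simpa using hB⟩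
    · exact (key _).mpr ⟨-1, by simp [one_apply]⟩
  · intro hA
    obtain ⟨k, hk⟩ := (key A).mp hA
    exact Subgroup.mem_closure_union_singleton_of_mul_zpow_mem hk

end ClockAndShift

/-- Let `n = r·m`, `ζ` a primitive `r`-th root of unity,
`M = diag(I_m, ζ I_m, …, ζ^{r-1} I_m)` and `S` the block cyclic permutation matrix
(`(Sv)_i = v_{i+1 mod r}` on the `r` blocks `ℂ^m`), all indexed by `Fin r × Fin m`.
Then `S` is invertible and for every invertible `A` and every integer `k`:
`M A M⁻¹ = ζ^k • A` if and only if `A · S^k` is block diagonal.  In particular the group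
`{A ∈ GL(n,ℂ) : M A M⁻¹ A⁻¹ is scalar}` is generated by the block-diagonal subgroup
`GL(m,ℂ)^r` together with `S`. -/
theorem stmt_14 {r m : ℕ} [NeZero r] (hm : 1 ≤ m) {ζ : ℂ} (hζ : IsPrimitiveRoot ζ r) :
    let ι := Fin r × Fin m
    let M : Matrix ι ι ℂ := Matrix.diagonal (fun x : ι => ζ ^ (x.1 : ℕ))
    let S : Matrix ι ι ℂ :=
      Matrix.of (fun x y : ι => if y.1 = x.1 + 1 ∧ x.2 = y.2 then (1 : ℂ) else 0)
    ∃ Su : (Matrix ι ι ℂ)ˣ, (Su : Matrix ι ι ℂ) = S ∧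
      (∀ A : Matrix ι ι ℂ, IsUnit A → ∀ k : ℤ,
        (M * A * M⁻¹ = ζ ^ k • A ↔
          ∀ x y : ι, x.1 ≠ y.1 → (A * ((Su ^ k : (Matrix ι ι ℂ)ˣ) : Matrix ι ι ℂ)) x y = 0)) ∧
      (∀ A : (Matrix ι ι ℂ)ˣ,
        (∃ z : ℂ, M * (A : Matrix ι ι ℂ) * M⁻¹ * ((A⁻¹ : (Matrix ι ι ℂ)ˣ) : Matrix ι ι ℂ) =
            z • (1 : Matrix ι ι ℂ)) ↔
          A ∈ Subgroup.closure
            ({B : (Matrix ι ι ℂ)ˣ |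
                ∀ x y : ι, x.1 ≠ y.1 → (B : Matrix ι ι ℂ) x y = 0} ∪ {Su})) := by
  have : Nonempty (Fin r × Fin m) := ⟨(0, ⟨0, hm⟩)⟩
  refine ⟨blockShiftUnit r (Fin m) ℂ, val_blockShiftUnit,
    fun A _ k ↦ diagonal_pow_mul_mul_inv_eq_zpow_smul_iff hζ A k, fun A ↦ ?_⟩
  rw [mem_closure_blockDiagonal_union_blockShiftUnit_iff hζ]
  exact Matrix.exists_diagonal_pow_mul_mul_inv_mul_inv_eq_smul_one_iff (hζ.ne_zero (NeZero.ne r)) _ A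
end

section
/- Let n ≥ 1 and let Sp(2n,ℂ) denote the complex symplectic group of 2n×2n matrices P with P·J·Pᵀ = J, where J = fromBlocks 0 Iₙ (−Iₙ) 0. Let S := fromBlocks (i·Iₙ) 0 0 (−i·Iₙ), where i is the imaginary unit. Then S ∈ Sp(2n,ℂ), J ∈ Sp(2n,ℂ), and S is conjugate to J within the symplectic group: there exists P ∈ Sp(2n,ℂ) with P·S·P⁻¹ = J. -/
/-!
The matrices involved all have scalar `n × n` blocks, `fromBlocks (a • 1) (b • 1) (c • 1) (d • 1)`:
they are the image of `!![a, b; c, d]` under `SL(2) → Sp(2n)`, `M ↦ M ⊗ Iₙ`, so both membership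
and the conjugation reduce to `2 × 2` computations. Writing `i` for a square root of `-1`, the
matrix `P = [[1, i/2], [i, 1/2]]` has determinant `1` and satisfies `P S = J' P`.
-/

open Matrix

namespace Matrix

variable {n R : Type*} [Fintype n] [DecidableEq n] [CommRing R]

variable (n) in
def scalarBlocks (a b c d : R) : Matrix (n ⊕ n) (n ⊕ n) R :=
  fromBlocks (a • 1) (b • 1) (c • 1) (d • 1)

theorem scalarBlocks_mul (a b c d a' b' c' d' : R) :
    scalarBlocks n a b c d * scalarBlocks n a' b' c' d' =
      scalarBlocks n (a * a' + b * c') (a * b' + b * d') (c * a' + d * c') (c * b' + d * d') := by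
  simp only [scalarBlocks, fromBlocks_multiply, smul_mul_smul_comm, mul_one, add_smul]

theorem scalarBlocks_mem_symplecticGroup {a b c d : R} (h : a * d - b * c = 1) :
    scalarBlocks n a b c d ∈ symplecticGroup n R := by
  rw [scalarBlocks, SymplecticGroup.fromBlocks_mem_iff]
  simp only [transpose_smul, transpose_one, smul_mul_smul_comm, mul_one, ← sub_smul]
  refine ⟨by rw [mul_comm], by rw [mul_comm], ?_⟩
  rw [mul_comm c b, h, one_smul]

theorem scalarBlocks_intertwine_of_mul_self_eq_neg_one {i : R} (hi : i * i = -1)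
    [Invertible (2 : R)] :
    scalarBlocks n 1 (i * ⅟2) i ⅟2 * scalarBlocks n i 0 0 (-i) =
      scalarBlocks n 0 1 (-1) 0 * scalarBlocks n 1 (i * ⅟2) i ⅟2 := by
  rw [scalarBlocks_mul, scalarBlocks_mul]
  congr 1
  · ring
  · linear_combination (-⅟2 : R) * hi
  · linear_combination hi
  · ring

end Matrix

theorem stmt_15_general {n : ℕ} :
    let J' : Matrix (Fin n ⊕ Fin n) (Fin n ⊕ Fin n) ℂ := Matrix.fromBlocks 0 1 (-1) 0
    let S : Matrix (Fin n ⊕ Fin n) (Fin n ⊕ Fin n) ℂ :=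
      Matrix.fromBlocks (Complex.I • 1) 0 0 ((-Complex.I) • 1)
    S ∈ Matrix.symplecticGroup (Fin n) ℂ ∧
      J' ∈ Matrix.symplecticGroup (Fin n) ℂ ∧
      ∃ P ∈ Matrix.symplecticGroup (Fin n) ℂ, P * S * P⁻¹ = J' := by
  intro J' S
  have hS : S = scalarBlocks (Fin n) Complex.I 0 0 (-Complex.I) := by
    simp [S, scalarBlocks]
  have hJ' : J' = scalarBlocks (Fin n) 0 1 (-1) 0 := by
    simp [J', scalarBlocks]
  set P := scalarBlocks (Fin n) 1 (Complex.I * ⅟2) Complex.I ⅟2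
  have hP : P ∈ symplecticGroup (Fin n) ℂ :=
    scalarBlocks_mem_symplecticGroup (by
      linear_combination (-⅟2 : ℂ) * Complex.I_mul_I + invOf_mul_self (2 : ℂ))
  refine ⟨hS ▸ scalarBlocks_mem_symplecticGroup (by linear_combination -Complex.I_mul_I),
    hJ' ▸ scalarBlocks_mem_symplecticGroup (by ring), P, hP, ?_⟩
  rw [hS, hJ', scalarBlocks_intertwine_of_mul_self_eq_neg_one Complex.I_mul_I, mul_assoc,
    mul_nonsing_inv P (SymplecticGroup.symplectic_det hP), mul_one]

/-- In the symplectic group `Sp(2n,ℂ)` (Mathlib's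
`Matrix.symplecticGroup (Fin n) ℂ`, matrices `P` with `P J Pᵀ = J`), the matrices
`J' = fromBlocks 0 Iₙ (−Iₙ) 0` and `S = fromBlocks (i Iₙ) 0 0 (−i Iₙ)` both belong to the
group, and `S` is conjugate to `J'` within the group: there is `P ∈ Sp(2n,ℂ)` with
`P S P⁻¹ = J'`. -/
theorem stmt_15 {n : ℕ} (hn : 1 ≤ n) :
    let J' : Matrix (Fin n ⊕ Fin n) (Fin n ⊕ Fin n) ℂ := Matrix.fromBlocks 0 1 (-1) 0
    let S : Matrix (Fin n ⊕ Fin n) (Fin n ⊕ Fin n) ℂ :=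
      Matrix.fromBlocks (Complex.I • 1) 0 0 ((-Complex.I) • 1)
    S ∈ Matrix.symplecticGroup (Fin n) ℂ ∧
      J' ∈ Matrix.symplecticGroup (Fin n) ℂ ∧
      ∃ P ∈ Matrix.symplecticGroup (Fin n) ℂ, P * S * P⁻¹ = J' :=
  stmt_15_general
end

section
/- Let n ≥ 1, let Sp(2n,ℂ) be the symplectic group {P : P·J·Pᵀ = J} with J = fromBlocks 0 Iₙ (−Iₙ) 0, and let S := fromBlocks (i·Iₙ) 0 0 (−i·Iₙ). Then for every M ∈ Sp(2n,ℂ): M commutes with S (equivalently S·M·S⁻¹ = M) if and only if there exists A ∈ GL(n,ℂ) such that M = fromBlocks A 0 0 ((Aᵀ)⁻¹). In particular the fixed-point subgroup Sp(2n,ℂ)^{Int_S} is isomorphic to GL(n,ℂ). -/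
open Matrix

/-!
Conjugation by `S = diag(i Iₙ, -i Iₙ)` acts on the blocks of `M = fromBlocks A B C D` by
`B ↦ -B`, `C ↦ -C`, so `M` commutes with `S` exactly when it is block diagonal. A block-diagonal
matrix `fromBlocks A 0 0 D` is symplectic exactly when `A Dᵀ = 1`, i.e. when `A` is invertible and
`D = (Aᵀ)⁻¹`.
-/

theorem smul_eq_smul_iff_of_ne {K V : Type*} [Field K] [AddCommGroup V] [Module K V] {a b : K}
    (hab : a ≠ b) (x : V) : a • x = b • x ↔ x = 0 := by
  rw [← sub_eq_zero, ← sub_smul, smul_eq_zero, sub_eq_zero]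
  exact or_iff_right hab

namespace Matrix

variable {m n R : Type*} [CommRing R]

theorem fromBlocks_smul_one_mul_eq_mul_iff {K : Type*} [Field K] [Fintype m] [Fintype n]
    [DecidableEq m] [DecidableEq n] {a b : K} (hab : a ≠ b) (A : Matrix m m K) (B : Matrix m n K)
    (C : Matrix n m K) (D : Matrix n n K) :
    fromBlocks (a • 1) 0 0 (b • 1) * fromBlocks A B C D =
        fromBlocks A B C D * fromBlocks (a • 1) 0 0 (b • 1) ↔
      B = 0 ∧ C = 0 := by
  simp only [fromBlocks_multiply, Matrix.smul_mul, Matrix.mul_smul, Matrix.one_mul,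
    Matrix.mul_one, Matrix.zero_mul, Matrix.mul_zero, add_zero, zero_add, fromBlocks_inj, true_and,
    and_true]
  rw [smul_eq_smul_iff_of_ne hab, @eq_comm _ (b • C), smul_eq_smul_iff_of_ne hab]

variable [Fintype m] [DecidableEq m]

theorem fromBlocks_zero_zero_mem_symplecticGroup_iff (A D : Matrix m m R) :
    fromBlocks A 0 0 D ∈ symplecticGroup m R ↔ A * Dᵀ = 1 := by
  simp only [SymplecticGroup.mem_iff, J, fromBlocks_transpose, transpose_zero, fromBlocks_multiply,
    mul_zero, zero_mul, mul_one, mul_neg, neg_mul, add_zero, zero_add, neg_zero, fromBlocks_inj,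
    true_and, and_true, neg_inj]
  refine ⟨And.left, fun h => ⟨h, ?_⟩⟩
  simpa [transpose_mul] using congrArg transpose h

noncomputable def fromBlocksTransposeInv : (Matrix m m R)ˣ →* Matrix (m ⊕ m) (m ⊕ m) R where
  toFun A := fromBlocks (A : Matrix m m R) 0 0 ((A : Matrix m m R)ᵀ)⁻¹
  map_one' := by simp
  map_mul' A B := by
    simp only [Units.val_mul, transpose_mul, Matrix.mul_inv_rev, fromBlocks_multiply, mul_zero,
      zero_mul, add_zero, zero_add]

theorem fromBlocksTransposeInv_apply (A : (Matrix m m R)ˣ) :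
    fromBlocksTransposeInv A = fromBlocks (A : Matrix m m R) 0 0 ((A : Matrix m m R)ᵀ)⁻¹ :=
  rfl

theorem fromBlocksTransposeInv_injective :
    Function.Injective (fromBlocksTransposeInv : (Matrix m m R)ˣ → _) := fun A B h =>
  Units.ext (by simpa [fromBlocksTransposeInv_apply] using congrArg toBlocks₁₁ h)

theorem fromBlocksTransposeInv_mem_symplecticGroup (A : (Matrix m m R)ˣ) :
    fromBlocksTransposeInv A ∈ symplecticGroup m R := by
  rw [fromBlocksTransposeInv_apply, fromBlocks_zero_zero_mem_symplecticGroup_iff,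
    ← transpose_nonsing_inv, transpose_transpose, ← coe_units_inv, ← Units.val_mul,
    mul_inv_cancel, Units.val_one]

theorem exists_fromBlocksTransposeInv_of_mem_symplecticGroup {A D : Matrix m m R}
    (h : fromBlocks A 0 0 D ∈ symplecticGroup m R) :
    ∃ U : (Matrix m m R)ˣ, fromBlocks A 0 0 D = fromBlocksTransposeInv U := by
  have hAD : A * Dᵀ = 1 := (fromBlocks_zero_zero_mem_symplecticGroup_iff A D).1 h
  refine ⟨⟨A, Dᵀ, hAD, mul_eq_one_comm.1 hAD⟩, ?_⟩
  rw [fromBlocksTransposeInv_apply, inv_eq_right_inv (B := D)]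
  simpa [transpose_mul] using congrArg transpose (mul_eq_one_comm.1 hAD)

theorem fromBlocks_smul_one_commute_iff_exists_fromBlocksTransposeInv {K : Type*} [Field K]
    {a b : K} (hab : a ≠ b) {M : Matrix (m ⊕ m) (m ⊕ m) K} (hM : M ∈ symplecticGroup m K) :
    fromBlocks (a • 1) 0 0 (b • 1) * M = M * fromBlocks (a • 1) 0 0 (b • 1) ↔
      ∃ U : (Matrix m m K)ˣ, M = fromBlocksTransposeInv U := by
  obtain ⟨A, B, C, D, rfl⟩ : ∃ A B C D, M = fromBlocks A B C D :=
    ⟨_, _, _, _, (fromBlocks_toBlocks M).symm⟩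
  rw [fromBlocks_smul_one_mul_eq_mul_iff hab]
  constructor
  · rintro ⟨rfl, rfl⟩
    exact exists_fromBlocksTransposeInv_of_mem_symplecticGroup hM
  · rintro ⟨U, hU⟩
    rw [fromBlocksTransposeInv_apply, fromBlocks_inj] at hU
    exact ⟨hU.2.1, hU.2.2.1⟩

end Matrix

theorem stmt_16_general {n : ℕ} :
    let S : Matrix (Fin n ⊕ Fin n) (Fin n ⊕ Fin n) ℂ :=
      Matrix.fromBlocks (Complex.I • 1) 0 0 ((-Complex.I) • 1)
    (∀ M ∈ Matrix.symplecticGroup (Fin n) ℂ,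
      (S * M = M * S ↔
        ∃ A : (Matrix (Fin n) (Fin n) ℂ)ˣ,
          M = Matrix.fromBlocks (A : Matrix (Fin n) (Fin n) ℂ) 0 0
            (((A : Matrix (Fin n) (Fin n) ℂ)ᵀ)⁻¹))) ∧
    (∀ A : (Matrix (Fin n) (Fin n) ℂ)ˣ,
      Matrix.fromBlocks (A : Matrix (Fin n) (Fin n) ℂ) 0 0
          (((A : Matrix (Fin n) (Fin n) ℂ)ᵀ)⁻¹) ∈ Matrix.symplecticGroup (Fin n) ℂ ∧
        S * Matrix.fromBlocks (A : Matrix (Fin n) (Fin n) ℂ) 0 0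
            (((A : Matrix (Fin n) (Fin n) ℂ)ᵀ)⁻¹) =
          Matrix.fromBlocks (A : Matrix (Fin n) (Fin n) ℂ) 0 0
            (((A : Matrix (Fin n) (Fin n) ℂ)ᵀ)⁻¹) * S) ∧
    Function.Injective (fun A : (Matrix (Fin n) (Fin n) ℂ)ˣ =>
      Matrix.fromBlocks (A : Matrix (Fin n) (Fin n) ℂ) 0 0
        (((A : Matrix (Fin n) (Fin n) ℂ)ᵀ)⁻¹)) ∧
    (∀ A B : (Matrix (Fin n) (Fin n) ℂ)ˣ,
      Matrix.fromBlocks ((A * B : (Matrix (Fin n) (Fin n) ℂ)ˣ) : Matrix (Fin n) (Fin n) ℂ)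
          0 0 ((((A * B : (Matrix (Fin n) (Fin n) ℂ)ˣ) : Matrix (Fin n) (Fin n) ℂ)ᵀ)⁻¹) =
        Matrix.fromBlocks (A : Matrix (Fin n) (Fin n) ℂ) 0 0
            (((A : Matrix (Fin n) (Fin n) ℂ)ᵀ)⁻¹) *
          Matrix.fromBlocks (B : Matrix (Fin n) (Fin n) ℂ) 0 0
            (((B : Matrix (Fin n) (Fin n) ℂ)ᵀ)⁻¹)) := by
  intro S
  have hI : Complex.I ≠ -Complex.I := fun h => Complex.I_ne_zero (CharZero.eq_neg_self_iff.1 h)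
  refine ⟨fun M hM => fromBlocks_smul_one_commute_iff_exists_fromBlocksTransposeInv hI hM,
    fun A => ⟨fromBlocksTransposeInv_mem_symplecticGroup A, ?_⟩,
    fromBlocksTransposeInv_injective, map_mul fromBlocksTransposeInv⟩
  exact (fromBlocks_smul_one_commute_iff_exists_fromBlocksTransposeInv hI
    (fromBlocksTransposeInv_mem_symplecticGroup A)).2 ⟨A, rfl⟩

/-- Let `S = fromBlocks (i Iₙ) 0 0 (−i Iₙ)`.  A symplectic matrix
`M ∈ Sp(2n,ℂ)` commutes with `S` if and only if `M = fromBlocks A 0 0 (Aᵀ)⁻¹` for some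
`A ∈ GL(n,ℂ)`.  In particular `A ↦ fromBlocks A 0 0 (Aᵀ)⁻¹` is an injective,
multiplicative map of `GL(n,ℂ)` onto the fixed-point subgroup `Sp(2n,ℂ)^{Int_S}`, so the
latter is isomorphic to `GL(n,ℂ)`. -/
theorem stmt_16 {n : ℕ} (hn : 1 ≤ n) :
    let S : Matrix (Fin n ⊕ Fin n) (Fin n ⊕ Fin n) ℂ :=
      Matrix.fromBlocks (Complex.I • 1) 0 0 ((-Complex.I) • 1)
    (∀ M ∈ Matrix.symplecticGroup (Fin n) ℂ,
      (S * M = M * S ↔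
        ∃ A : (Matrix (Fin n) (Fin n) ℂ)ˣ,
          M = Matrix.fromBlocks (A : Matrix (Fin n) (Fin n) ℂ) 0 0
            (((A : Matrix (Fin n) (Fin n) ℂ)ᵀ)⁻¹))) ∧
    (∀ A : (Matrix (Fin n) (Fin n) ℂ)ˣ,
      Matrix.fromBlocks (A : Matrix (Fin n) (Fin n) ℂ) 0 0
          (((A : Matrix (Fin n) (Fin n) ℂ)ᵀ)⁻¹) ∈ Matrix.symplecticGroup (Fin n) ℂ ∧
        S * Matrix.fromBlocks (A : Matrix (Fin n) (Fin n) ℂ) 0 0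
            (((A : Matrix (Fin n) (Fin n) ℂ)ᵀ)⁻¹) =
          Matrix.fromBlocks (A : Matrix (Fin n) (Fin n) ℂ) 0 0
            (((A : Matrix (Fin n) (Fin n) ℂ)ᵀ)⁻¹) * S) ∧
    Function.Injective (fun A : (Matrix (Fin n) (Fin n) ℂ)ˣ =>
      Matrix.fromBlocks (A : Matrix (Fin n) (Fin n) ℂ) 0 0
        (((A : Matrix (Fin n) (Fin n) ℂ)ᵀ)⁻¹)) ∧
    (∀ A B : (Matrix (Fin n) (Fin n) ℂ)ˣ,
      Matrix.fromBlocks ((A * B : (Matrix (Fin n) (Fin n) ℂ)ˣ) : Matrix (Fin n) (Fin n) ℂ)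
          0 0 ((((A * B : (Matrix (Fin n) (Fin n) ℂ)ˣ) : Matrix (Fin n) (Fin n) ℂ)ᵀ)⁻¹) =
        Matrix.fromBlocks (A : Matrix (Fin n) (Fin n) ℂ) 0 0
            (((A : Matrix (Fin n) (Fin n) ℂ)ᵀ)⁻¹) *
          Matrix.fromBlocks (B : Matrix (Fin n) (Fin n) ℂ) 0 0
            (((B : Matrix (Fin n) (Fin n) ℂ)ᵀ)⁻¹)) :=
  stmt_16_general
end

section
/- Let n ≥ 1, let Sp(2n,ℂ) be the symplectic group {P : P·J·Pᵀ = J} with J = fromBlocks 0 Iₙ (−Iₙ) 0, and let S := fromBlocks (i·Iₙ) 0 0 (−i·Iₙ). Then for every M ∈ Sp(2n,ℂ): S·M·S⁻¹ = −M if and only if there exists N ∈ Sp(2n,ℂ) commuting with S such that M = N·J; equivalently, if and only if there exists A ∈ GL(n,ℂ) with M = fromBlocks 0 A (−(Aᵀ)⁻¹) 0. In particular, the subgroup {M ∈ Sp(2n,ℂ) : S·M·S⁻¹·M⁻¹ ∈ {±1}} is generated by the centralizer of S in Sp(2n,ℂ) together with J. -/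
/-!
Conjugation by `S = diag(i, -i)` negates the off-diagonal blocks and fixes the diagonal ones, so
`S M S⁻¹ = -M` says exactly that `M` is block-antidiagonal; for symplectic `M` this forces the
shape `[[0, A], [-(Aᵀ)⁻¹, 0]]`. Since `S` anticommutes with `J'` and `J'² = -1`, `M` anticommutes
with `S` iff `N = -M J'` commutes with it, and `M = N J'`.

For the subgroup, everything is group theory in `Sp(2n, ℂ)`: `⁅S, J'⁆ = -1` is central of order
two, and `g ↦ ⁅S, g⁆` is multiplicative on elements whose commutator with `S` is central, so
`{g | ⁅S, g⁆ = ±1}` is a subgroup; an element with `⁅S, g⁆ = ⁅S, J'⁆` is `(g J'⁻¹) J'` with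
`g J'⁻¹` in the centralizer of `S`.
-/
open Matrix
open scoped commutatorElement

section Commutator

variable {G : Type*} [Group G]

open Subgroup

theorem commutatorElement_mul_right_of_mem_center {a b c : G} (hc : ⁅a, c⁆ ∈ center G) :
    ⁅a, b * c⁆ = ⁅a, b⁆ * ⁅a, c⁆ := by
  rw [commutatorElement_mul_right_eq_mul_conj, mul_assoc _ b, mem_center_iff.mp hc b,
    ← mul_assoc, mul_inv_cancel_right]

theorem commutatorElement_inv_right_of_mem_center {a b : G} (hb : ⁅a, b⁆ ∈ center G) :
    ⁅a, b⁻¹⁆ = ⁅a, b⁆⁻¹ := by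
  rw [commutatorElement_inv_right, commutatorElement_inv, mul_assoc,
    ← mem_center_iff.mp (commutatorElement_inv a b ▸ inv_mem hb) b, inv_mul_cancel_left]

theorem mem_centralizer_singleton_iff_commutatorElement_eq_one {s g : G} :
    g ∈ centralizer {s} ↔ ⁅s, g⁆ = 1 := by
  rw [mem_centralizer_singleton_iff, eq_comm, commutatorElement_eq_one_iff_mul_comm]

theorem commutatorElement_eq_iff_mul_inv_mem_centralizer {s g j : G} (hj : ⁅s, j⁆ ∈ center G) :
    ⁅s, g⁆ = ⁅s, j⁆ ↔ g * j⁻¹ ∈ centralizer {s} := by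
  have hj' : ⁅s, j⁻¹⁆ ∈ center G := commutatorElement_inv_right_of_mem_center hj ▸ inv_mem hj
  rw [mem_centralizer_singleton_iff_commutatorElement_eq_one,
    commutatorElement_mul_right_of_mem_center hj', commutatorElement_inv_right_of_mem_center hj,
    mul_inv_eq_one]

theorem mem_closure_centralizer_union_singleton_iff {s j g : G} (hj : ⁅s, j⁆ ∈ center G)
    (hj2 : ⁅s, j⁆ * ⁅s, j⁆ = 1) :
    g ∈ closure (centralizer {s} ∪ {j} : Set G) ↔ ⁅s, g⁆ = 1 ∨ ⁅s, g⁆ = ⁅s, j⁆ := by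
  constructor
  · intro hg
    induction hg using closure_induction with
    | mem x hx =>
      rcases hx with hx | rfl
      · exact .inl (mem_centralizer_singleton_iff_commutatorElement_eq_one.mp hx)
      · exact .inr rfl
    | one => exact .inl (commutatorElement_one_right s)
    | mul x y _ _ hx hy =>
      have hcen : ⁅s, y⁆ ∈ center G := hy.elim (· ▸ one_mem _) (· ▸ hj)
      rw [commutatorElement_mul_right_of_mem_center hcen]
      rcases hx with hx | hx <;> rcases hy with hy | hy <;> simp [hx, hy, hj2]
    | inv x _ hx =>
      have hcen : ⁅s, x⁆ ∈ center G := hx.elim (· ▸ one_mem _) (· ▸ hj)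
      rw [commutatorElement_inv_right_of_mem_center hcen]
      rcases hx with hx | hx <;> simp [hx, inv_eq_of_mul_eq_one_right hj2]
  · rintro (hg | hg)
    · exact Subgroup.subset_closure
        (Or.inl (mem_centralizer_singleton_iff_commutatorElement_eq_one.mpr hg))
    · rw [← inv_mul_cancel_right g j]
      exact mul_mem (Subgroup.subset_closure
          (Or.inl ((commutatorElement_eq_iff_mul_inv_mem_centralizer hj).mp hg)))
        (Subgroup.subset_closure (Or.inr rfl))

end Commutator

section Matrix

variable {l R : Type*} [Fintype l] [DecidableEq l] [CommRing R]

omit [Fintype l] in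
theorem fromBlocks_zero_one_neg_one_zero : fromBlocks (0 : Matrix l l R) 1 (-1) 0 = -J l R := by
  simp [J, fromBlocks_neg]

theorem fromBlocks_zero_mem_symplecticGroup_iff {B C : Matrix l l R} :
    fromBlocks 0 B C 0 ∈ symplecticGroup l R ↔ Cᵀ * B = -1 := by
  simp [SymplecticGroup.fromBlocks_mem_iff, neg_eq_iff_eq_neg]

theorem exists_units_eq_of_transpose_mul_eq_neg_one {B C : Matrix l l R} (h : Cᵀ * B = -1) :
    ∃ A : (Matrix l l R)ˣ, B = A ∧ C = -((A : Matrix l l R)ᵀ)⁻¹ := by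
  have hB : B * -Cᵀ = 1 := mul_eq_one_comm.mp (by rw [neg_mul, h, neg_neg])
  refine ⟨⟨B, -Cᵀ, hB, mul_eq_one_comm.mp hB⟩, rfl, ?_⟩
  rw [← transpose_nonsing_inv, inv_eq_right_inv hB, transpose_neg, transpose_transpose, neg_neg]

end Matrix

section iDiag

variable (l : Type*) [Fintype l] [DecidableEq l]

noncomputable def iDiag : Matrix (l ⊕ l) (l ⊕ l) ℂ :=
  fromBlocks (Complex.I • 1) 0 0 (-Complex.I • 1)

theorem iDiag_mul_self : iDiag l * iDiag l = -1 := by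
  simp [iDiag, fromBlocks_multiply, smul_smul, ← fromBlocks_one, fromBlocks_neg]

theorem iDiag_mem : iDiag l ∈ symplecticGroup l ℂ := by
  simp [iDiag, SymplecticGroup.fromBlocks_mem_iff, smul_smul]

noncomputable def iDiagSp : symplecticGroup l ℂ := ⟨iDiag l, iDiag_mem l⟩

def negJSp : symplecticGroup l ℂ := ⟨-J l ℂ, SymplecticGroup.neg_mem (SymplecticGroup.J_mem l ℂ)⟩

variable {l}

theorem iDiag_mul_fromBlocks_eq_neg_iff {A B C D : Matrix l l ℂ} :
    iDiag l * fromBlocks A B C D = -fromBlocks A B C D * iDiag l ↔ A = 0 ∧ D = 0 := by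
  simp [iDiag, fromBlocks_multiply, fromBlocks_neg, eq_neg_iff_add_eq_zero, neg_eq_iff_add_eq_zero,
    ← add_smul, Complex.I_ne_zero]

theorem iDiag_mul_J : iDiag l * J l ℂ = -J l ℂ * iDiag l :=
  iDiag_mul_fromBlocks_eq_neg_iff.mpr ⟨rfl, rfl⟩

noncomputable instance : Invertible (iDiag l) :=
  ⟨-iDiag l, by rw [neg_mul, iDiag_mul_self, neg_neg], by rw [mul_neg, iDiag_mul_self, neg_neg]⟩

theorem conj_iDiag_eq_neg_iff {M : Matrix (l ⊕ l) (l ⊕ l) ℂ} :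
    iDiag l * M * (iDiag l)⁻¹ = -M ↔ iDiag l * M = -M * iDiag l :=
  mul_inv_eq_iff_eq_mul_of_invertible _ _ _

theorem conj_iDiag_eq_neg_iff_exists_commute_mul {M : Matrix (l ⊕ l) (l ⊕ l) ℂ}
    (hM : M ∈ symplecticGroup l ℂ) :
    iDiag l * M * (iDiag l)⁻¹ = -M ↔
      ∃ N ∈ symplecticGroup l ℂ, iDiag l * N = N * iDiag l ∧ M = N * -J l ℂ := by
  rw [conj_iDiag_eq_neg_iff]
  constructor
  · intro h
    refine ⟨M * J l ℂ, mul_mem hM (SymplecticGroup.J_mem l ℂ), ?_, ?_⟩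
    · rw [← mul_assoc, h, mul_assoc (-M), iDiag_mul_J]
      noncomm_ring
    · rw [mul_neg, mul_assoc, J_squared, mul_neg, mul_one, neg_neg]
  · rintro ⟨N, -, hN, rfl⟩
    rw [← mul_assoc, hN, mul_neg, mul_neg, mul_assoc, iDiag_mul_J]
    noncomm_ring

theorem conj_iDiag_eq_neg_iff_exists_units {M : Matrix (l ⊕ l) (l ⊕ l) ℂ}
    (hM : M ∈ symplecticGroup l ℂ) :
    iDiag l * M * (iDiag l)⁻¹ = -M ↔
      ∃ A : (Matrix l l ℂ)ˣ, M = fromBlocks 0 (A : Matrix l l ℂ) (-((A : Matrix l l ℂ)ᵀ)⁻¹) 0 := by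
  rw [conj_iDiag_eq_neg_iff]
  constructor
  · intro h
    rw [← fromBlocks_toBlocks M, iDiag_mul_fromBlocks_eq_neg_iff] at h
    rw [← fromBlocks_toBlocks M, h.1, h.2, fromBlocks_zero_mem_symplecticGroup_iff] at hM
    obtain ⟨A, hB, hC⟩ := exists_units_eq_of_transpose_mul_eq_neg_one hM
    exact ⟨A, by rw [← fromBlocks_toBlocks M, h.1, h.2, hB, hC]⟩
  · rintro ⟨A, rfl⟩
    exact iDiag_mul_fromBlocks_eq_neg_iff.mpr ⟨rfl, rfl⟩

theorem coe_commutatorElement_iDiagSp (M : symplecticGroup l ℂ) :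
    ((⁅iDiagSp l, M⁆ : symplecticGroup l ℂ) : Matrix (l ⊕ l) (l ⊕ l) ℂ) =
      iDiag l * (M : Matrix (l ⊕ l) (l ⊕ l) ℂ) * (iDiag l)⁻¹ *
        (M : Matrix (l ⊕ l) (l ⊕ l) ℂ)⁻¹ := by
  simp [commutatorElement_def, SymplecticGroup.coe_inv', iDiagSp]

theorem coe_commutatorElement_iDiagSp_negJSp :
    ((⁅iDiagSp l, negJSp l⁆ : symplecticGroup l ℂ) : Matrix (l ⊕ l) (l ⊕ l) ℂ) = -1 := by
  have hconj : iDiag l * -J l ℂ * (iDiag l)⁻¹ = -(-J l ℂ) :=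
    conj_iDiag_eq_neg_iff.mpr (by simp only [mul_neg, iDiag_mul_J, neg_mul, neg_neg])
  have hinv : (-J l ℂ)⁻¹ = J l ℂ := inv_eq_right_inv (by rw [neg_mul, J_squared, neg_neg])
  rw [coe_commutatorElement_iDiagSp, negJSp, hconj, neg_neg, hinv, J_squared]

theorem commutatorElement_iDiagSp_negJSp_mem_center :
    ⁅iDiagSp l, negJSp l⁆ ∈ Subgroup.center (symplecticGroup l ℂ) :=
  Subgroup.mem_center_iff.mpr fun g ↦ Subtype.ext <| by
    simp [coe_commutatorElement_iDiagSp_negJSp]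

theorem commutatorElement_iDiagSp_negJSp_mul_self :
    ⁅iDiagSp l, negJSp l⁆ * ⁅iDiagSp l, negJSp l⁆ = 1 :=
  Subtype.ext <| by simp [coe_commutatorElement_iDiagSp_negJSp]

end iDiag

theorem stmt_17_general {n : ℕ} :
    let J' : Matrix (Fin n ⊕ Fin n) (Fin n ⊕ Fin n) ℂ := Matrix.fromBlocks 0 1 (-1) 0
    let S : Matrix (Fin n ⊕ Fin n) (Fin n ⊕ Fin n) ℂ :=
      Matrix.fromBlocks (Complex.I • 1) 0 0 ((-Complex.I) • 1)
    (∀ M ∈ Matrix.symplecticGroup (Fin n) ℂ,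
      (S * M * S⁻¹ = -M ↔
        ∃ N ∈ Matrix.symplecticGroup (Fin n) ℂ, S * N = N * S ∧ M = N * J') ∧
      (S * M * S⁻¹ = -M ↔
        ∃ A : (Matrix (Fin n) (Fin n) ℂ)ˣ,
          M = Matrix.fromBlocks 0 (A : Matrix (Fin n) (Fin n) ℂ)
            (-(((A : Matrix (Fin n) (Fin n) ℂ)ᵀ)⁻¹)) 0)) ∧
    ∃ hJ : J' ∈ Matrix.symplecticGroup (Fin n) ℂ,
      ∀ M : Matrix.symplecticGroup (Fin n) ℂ,
        ((∃ ε : ℂ, (ε = 1 ∨ ε = -1) ∧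
            S * (M : Matrix (Fin n ⊕ Fin n) (Fin n ⊕ Fin n) ℂ) * S⁻¹ *
              ((M : Matrix (Fin n ⊕ Fin n) (Fin n ⊕ Fin n) ℂ))⁻¹ = ε • 1) ↔
          M ∈ Subgroup.closure
            ({N : Matrix.symplecticGroup (Fin n) ℂ |
                S * (N : Matrix (Fin n ⊕ Fin n) (Fin n ⊕ Fin n) ℂ) =
                  (N : Matrix (Fin n ⊕ Fin n) (Fin n ⊕ Fin n) ℂ) * S} ∪ {⟨J', hJ⟩})) := by
  intro J' S
  rw [show J' = -J (Fin n) ℂ from fromBlocks_zero_one_neg_one_zero]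
  refine ⟨fun M hM ↦ ⟨conj_iDiag_eq_neg_iff_exists_commute_mul hM,
    conj_iDiag_eq_neg_iff_exists_units hM⟩, (negJSp (Fin n)).2, fun M ↦ ?_⟩
  have hcentralizer : {N : symplecticGroup (Fin n) ℂ | S * N = N * S} =
      Subgroup.centralizer {iDiagSp (Fin n)} := by
    ext N
    rw [Set.mem_ofPred_eq, SetLike.mem_coe, Subgroup.mem_centralizer_singleton_iff, Subtype.ext_iff,
      eq_comm]
    rfl
  rw [hcentralizer]
  refine ((mem_closure_centralizer_union_singleton_iff (j := negJSp (Fin n))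
    commutatorElement_iDiagSp_negJSp_mem_center commutatorElement_iDiagSp_negJSp_mul_self).trans
    ?_).symm
  rw [Subtype.ext_iff, Subtype.ext_iff, coe_commutatorElement_iDiagSp_negJSp,
    coe_commutatorElement_iDiagSp]
  simp only [or_and_right, exists_or, exists_eq_left, one_smul, neg_smul, OneMemClass.coe_one]
  rfl

/-- Let `S = fromBlocks (i Iₙ) 0 0 (−i Iₙ)` and
`J' = fromBlocks 0 Iₙ (−Iₙ) 0`.  For `M ∈ Sp(2n,ℂ)` one has `S M S⁻¹ = −M` iff
`M = N J'` for some `N ∈ Sp(2n,ℂ)` commuting with `S`, iff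
`M = fromBlocks 0 A (−(Aᵀ)⁻¹) 0` for some `A ∈ GL(n,ℂ)`.  In particular the subgroup
`{M ∈ Sp(2n,ℂ) : S M S⁻¹ M⁻¹ ∈ {±1}}` is generated by the centralizer of `S` in
`Sp(2n,ℂ)` together with `J'`. -/
theorem stmt_17 {n : ℕ} (hn : 1 ≤ n) :
    let J' : Matrix (Fin n ⊕ Fin n) (Fin n ⊕ Fin n) ℂ := Matrix.fromBlocks 0 1 (-1) 0
    let S : Matrix (Fin n ⊕ Fin n) (Fin n ⊕ Fin n) ℂ :=
      Matrix.fromBlocks (Complex.I • 1) 0 0 ((-Complex.I) • 1)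
    (∀ M ∈ Matrix.symplecticGroup (Fin n) ℂ,
      (S * M * S⁻¹ = -M ↔
        ∃ N ∈ Matrix.symplecticGroup (Fin n) ℂ, S * N = N * S ∧ M = N * J') ∧
      (S * M * S⁻¹ = -M ↔
        ∃ A : (Matrix (Fin n) (Fin n) ℂ)ˣ,
          M = Matrix.fromBlocks 0 (A : Matrix (Fin n) (Fin n) ℂ)
            (-(((A : Matrix (Fin n) (Fin n) ℂ)ᵀ)⁻¹)) 0)) ∧
    ∃ hJ : J' ∈ Matrix.symplecticGroup (Fin n) ℂ,
      ∀ M : Matrix.symplecticGroup (Fin n) ℂ,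
        ((∃ ε : ℂ, (ε = 1 ∨ ε = -1) ∧
            S * (M : Matrix (Fin n ⊕ Fin n) (Fin n ⊕ Fin n) ℂ) * S⁻¹ *
              ((M : Matrix (Fin n ⊕ Fin n) (Fin n ⊕ Fin n) ℂ))⁻¹ = ε • 1) ↔
          M ∈ Subgroup.closure
            ({N : Matrix.symplecticGroup (Fin n) ℂ |
                S * (N : Matrix (Fin n ⊕ Fin n) (Fin n ⊕ Fin n) ℂ) =
                  (N : Matrix (Fin n ⊕ Fin n) (Fin n ⊕ Fin n) ℂ) * S} ∪ {⟨J', hJ⟩})) :=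
  stmt_17_general
end
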